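/- Let Y be a symmetric n×n real matrix, x ∈ {±1}^n, and let D be the diagonal matrix with entries D_ii = Σ_{j=1}^n Y_ij x_i x_j. If the second smallest eigenvalue of D − Y is strictly positive, then X = x x^T is the unique optimal solution of the SDP: maximize Tr(YX) subject to X_ii = 1 and X ⪰ 0. -/

import Mathlib

open Matrix

/-- The `k`-th smallest eigenvalue of a Hermitian matrix (sorted in increasing order). -/
noncomputable def eigSorted {n : ℕ} {M : Matrix (Fin n) (Fin n) ℝ}
    (hM : M.IsHermitian) : Fin n → ℝ :=
  hM.eigenvalues ∘ Tuple.sort hM.eigenvalues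

/-!
Put `L = D - Y`. Since `x i ^ 2 = 1`, `L x = 0`, and for every `X` with unit diagonal
`Tr (Y X) = Tr D - Tr (L X)`, while `Tr (L xxᵀ) = 0`. The gap hypothesis makes every eigenvalue
of `L` but the smallest positive; as `x` is a nonzero kernel vector the smallest one is `0`, so
`L ⪰ 0` and `ker L = span x`. For `X ⪰ 0` this gives `Tr (L X) ≥ 0`, hence optimality of `xxᵀ`.
At an optimum `Tr (L X) = 0`, which for two positive semidefinite matrices forces `L X = 0`:
every column of `X` is a multiple of `x`, and the unit diagonal pins `X = xxᵀ`.
-/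

namespace Matrix

variable {n : Type*}

section CommRing

variable {R : Type*} [CommRing R]

lemma eq_vecMulVec_self_of_transpose_mem_span {X : Matrix n n R} {x : n → R}
    (hx : ∀ i, x i * x i = 1) (hX : ∀ i, X i i = 1) (hcol : ∀ j, Xᵀ j ∈ R ∙ x) :
    X = vecMulVec x x := by
  ext i j
  obtain ⟨t, ht⟩ := Submodule.mem_span_singleton.mp (hcol j)
  have hXt (k : n) : X k j = t * x k := by simpa using (congrFun ht k).symm
  have ht_eq : t = x j :=
    calc t = t * (x j * x j) := by rw [hx j, mul_one]
      _ = X j j * x j := by rw [hXt, mul_assoc]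
      _ = x j := by rw [hX, one_mul]
  rw [hXt, ht_eq, vecMulVec_apply, mul_comm]

variable [Fintype n] [DecidableEq n]

lemma diagonal_sum_mul_mul_sub_mulVec_eq_zero (Y : Matrix n n R) {x : n → R}
    (hx : ∀ i, x i * x i = 1) :
    (diagonal (fun i ↦ ∑ j, Y i j * x i * x j) - Y) *ᵥ x = 0 := by
  funext i
  rw [sub_mulVec, Pi.sub_apply, mulVec_diagonal, Finset.sum_mul, Pi.zero_apply, sub_eq_zero]
  refine Finset.sum_congr rfl fun j _ ↦ ?_
  linear_combination Y i j * x j * hx i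

lemma trace_mul_eq_trace_diagonal_sub (Y X : Matrix n n R) (d : n → R) (hX : ∀ i, X i i = 1) :
    (Y * X).trace = (diagonal d).trace - ((diagonal d - Y) * X).trace := by
  have hdX : (diagonal d * X).trace = (diagonal d).trace := by
    simp [trace, diagonal_mul, hX]
  rw [Matrix.sub_mul, trace_sub, hdX, sub_sub_cancel]

end CommRing

variable [Fintype n] {𝕜 : Type*} [RCLike 𝕜]

open scoped ComplexOrder

section Trace

open scoped MatrixOrder

lemma trace_conjTranspose_mul_self_mul_conjTranspose_mul_self (C E : Matrix n n 𝕜) :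
    (Cᴴ * C * (Eᴴ * E)).trace = (C * Eᴴ * (C * Eᴴ)ᴴ).trace := by
  rw [conjTranspose_mul, conjTranspose_conjTranspose, ← trace_mul_cycle, Matrix.mul_assoc,
    Matrix.mul_assoc, Matrix.mul_assoc]

variable {A B : Matrix n n 𝕜}

lemma PosSemidef.trace_mul_nonneg (hA : A.PosSemidef) (hB : B.PosSemidef) :
    0 ≤ (A * B).trace := by
  classical
  obtain ⟨C, rfl⟩ := CStarAlgebra.nonneg_iff_eq_star_mul_self.mp hA.nonneg
  obtain ⟨E, rfl⟩ := CStarAlgebra.nonneg_iff_eq_star_mul_self.mp hB.nonneg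
  rw [star_eq_conjTranspose, star_eq_conjTranspose,
    trace_conjTranspose_mul_self_mul_conjTranspose_mul_self]
  exact (posSemidef_self_mul_conjTranspose _).trace_nonneg

lemma PosSemidef.trace_mul_eq_zero_iff (hA : A.PosSemidef) (hB : B.PosSemidef) :
    (A * B).trace = 0 ↔ A * B = 0 := by
  refine ⟨fun h ↦ ?_, fun h ↦ by rw [h, trace_zero]⟩
  classical
  obtain ⟨C, rfl⟩ := CStarAlgebra.nonneg_iff_eq_star_mul_self.mp hA.nonneg
  obtain ⟨E, rfl⟩ := CStarAlgebra.nonneg_iff_eq_star_mul_self.mp hB.nonneg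
  rw [star_eq_conjTranspose, star_eq_conjTranspose,
    trace_conjTranspose_mul_self_mul_conjTranspose_mul_self,
    trace_mul_conjTranspose_self_eq_zero_iff] at h
  rw [star_eq_conjTranspose, star_eq_conjTranspose, Matrix.mul_assoc, ← Matrix.mul_assoc C, h,
    Matrix.zero_mul, Matrix.mul_zero]

end Trace

namespace IsHermitian

variable [DecidableEq n] {M : Matrix n n 𝕜} (hM : M.IsHermitian)

lemma exists_eigenvalues_eq_zero {x : n → 𝕜} (hx : x ≠ 0) (hMx : M *ᵥ x = 0) :
    ∃ i, hM.eigenvalues i = 0 := by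
  have hdet : M.det = 0 := exists_mulVec_eq_zero_iff.mp ⟨x, hx, hMx⟩
  simpa [hM.det_eq_prod_eigenvalues, Finset.prod_eq_zero_iff] using hdet

lemma finrank_ker_le_one {i₀ : n} (hne : ∀ i ≠ i₀, hM.eigenvalues i ≠ 0) :
    Module.finrank 𝕜 (LinearMap.ker M.mulVecLin) ≤ 1 := by
  have hrank : Fintype.card n - 1 ≤ M.rank :=
    calc Fintype.card n - 1 = Fintype.card {i // i ≠ i₀} := by
          rw [Fintype.card_subtype_compl, Fintype.card_subtype_eq]
      _ ≤ Fintype.card {i // hM.eigenvalues i ≠ 0} := Fintype.card_subtype_mono _ _ hne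
      _ = M.rank := hM.rank_eq_card_non_zero_eigs.symm
  have := LinearMap.finrank_range_add_finrank_ker M.mulVecLin
  rw [Module.finrank_fintype_fun_eq_card] at this
  unfold Matrix.rank at hrank
  omega

lemma ker_mulVecLin_eq_span_singleton {i₀ : n} (hne : ∀ i ≠ i₀, hM.eigenvalues i ≠ 0)
    {x : n → 𝕜} (hx : x ≠ 0) (hMx : M *ᵥ x = 0) :
    LinearMap.ker M.mulVecLin = 𝕜 ∙ x := by
  have hmem : x ∈ LinearMap.ker M.mulVecLin := hMx
  refine eq_span_singleton_of_mem_of_finrank_eq_one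
    (le_antisymm (hM.finrank_ker_le_one hne) ?_) hmem hx
  exact Submodule.one_le_finrank_iff.mpr ((Submodule.ne_bot_iff _).mpr ⟨x, hmem, hx⟩)

lemma posSemidef_of_eigenvalues_pos {i₀ : n} (hpos : ∀ i ≠ i₀, 0 < hM.eigenvalues i)
    {x : n → 𝕜} (hx : x ≠ 0) (hMx : M *ᵥ x = 0) : M.PosSemidef := by
  obtain ⟨k, hk⟩ := hM.exists_eigenvalues_eq_zero hx hMx
  have hk₀ : k = i₀ := by_contra fun h ↦ (hpos k h).ne' hk
  refine hM.posSemidef_iff_eigenvalues_nonneg.mpr fun i ↦ ?_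
  rcases eq_or_ne i i₀ with rfl | hi
  · exact (hk₀ ▸ hk).ge
  · exact (hpos i hi).le

end IsHermitian

end Matrix

lemma eigSorted_le_eigenvalues {n : ℕ} {M : Matrix (Fin n) (Fin n) ℝ} (hM : M.IsHermitian)
    {k i : Fin n} (hk : k ≤ (Tuple.sort hM.eigenvalues).symm i) :
    eigSorted hM k ≤ hM.eigenvalues i := by
  simpa [eigSorted] using Tuple.monotone_sort hM.eigenvalues hk

lemma eigSorted_one_le_eigenvalues {n : ℕ} {M : Matrix (Fin n) (Fin n) ℝ} (hM : M.IsHermitian)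
    (hn : 1 < n) {i : Fin n} (hi : i ≠ Tuple.sort hM.eigenvalues ⟨0, by omega⟩) :
    eigSorted hM ⟨1, hn⟩ ≤ hM.eigenvalues i := by
  have hi' : (Tuple.sort hM.eigenvalues).symm i ≠ ⟨0, by omega⟩ := fun h ↦
    hi (by rw [← h, Equiv.apply_symm_apply])
  exact eigSorted_le_eigenvalues hM
    (Fin.mk_le_of_le_val (Nat.one_le_iff_ne_zero.mpr fun h ↦ hi' (Fin.ext h)))

/-- With the explicit dual certificate `D_{ii} = ∑_j Y_{ij} x_i x_j`:
if `λ₂(D - Y) > 0` then `X = xxᵀ` is the unique optimal solution of the SDP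
`max Tr(YX) s.t. X_{ii} = 1, X ⪰ 0`. -/
theorem stmt1 {n : ℕ} (hn : 2 ≤ n) (Y : Matrix (Fin n) (Fin n) ℝ)
    (x : Fin n → ℝ) (hx : ∀ i, x i = 1 ∨ x i = -1)
    (D : Matrix (Fin n) (Fin n) ℝ)
    (hD : D = Matrix.diagonal fun i => ∑ j, Y i j * x i * x j)
    (hH : (D - Y).IsHermitian)
    (hgap : 0 < eigSorted hH ⟨1, by omega⟩) :
    (∀ X : Matrix (Fin n) (Fin n) ℝ, (∀ i, X i i = 1) → X.PosSemidef →
      (Y * X).trace ≤ (Y * vecMulVec x x).trace) ∧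
    (∀ X : Matrix (Fin n) (Fin n) ℝ, (∀ i, X i i = 1) → X.PosSemidef →
      (Y * X).trace = (Y * vecMulVec x x).trace → X = vecMulVec x x) := by
  have hx2 (i : Fin n) : x i * x i = 1 := by rcases hx i with h | h <;> simp [h]
  have hx0 : x ≠ 0 := fun h ↦ by simpa [h] using hx2 ⟨0, by omega⟩
  have hLx : (D - Y) *ᵥ x = 0 := hD ▸ diagonal_sum_mul_mul_sub_mulVec_eq_zero Y hx2
  have hpos (i : Fin n) (hi : i ≠ Tuple.sort hH.eigenvalues ⟨0, by omega⟩) :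
      0 < hH.eigenvalues i :=
    hgap.trans_le (eigSorted_one_le_eigenvalues hH (by omega) hi)
  have hL : (D - Y).PosSemidef := hH.posSemidef_of_eigenvalues_pos hpos hx0 hLx
  have hker := hH.ker_mulVecLin_eq_span_singleton (fun i hi ↦ (hpos i hi).ne') hx0 hLx
  have hobj (X : Matrix (Fin n) (Fin n) ℝ) (hX : ∀ i, X i i = 1) :
      (Y * X).trace = (Y * vecMulVec x x).trace - ((D - Y) * X).trace := by
    have hxx : (D - Y) * vecMulVec x x = 0 := by rw [mul_vecMulVec, hLx, zero_vecMulVec]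
    rw [hD] at hxx ⊢
    rw [trace_mul_eq_trace_diagonal_sub Y X _ hX,
      trace_mul_eq_trace_diagonal_sub Y _ _ fun i ↦ hx2 i, hxx, trace_zero, sub_zero]
  refine ⟨fun X hXd hX ↦ ?_, fun X hXd hX hopt ↦ ?_⟩
  · linarith [hobj X hXd, hL.trace_mul_nonneg hX]
  · have hLX : (D - Y) * X = 0 := (hL.trace_mul_eq_zero_iff hX).mp (by linarith [hobj X hXd])
    refine eq_vecMulVec_self_of_transpose_mem_span hx2 hXd fun j ↦ hker ▸ ?_
    exact funext fun i ↦ congrFun (congrFun hLX i) j
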